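/- arXiv:math/0509085 — 3 statements merged into one kernel-verified Lean document; each statement's English description precedes it below -/
import Mathlib

section
/- Let φ : ℂ[A,B,C,D] → ℂ[x,y,z]/(x² + y³ + z⁴) be the ℂ-algebra homomorphism sending A to the class of x², B to the class of xz, C to the class of z², and D to the class of y. Then the kernel of φ is the ideal of ℂ[A,B,C,D] generated by the two elements AC − B² and A + D³ + C². -/
open MvPolynomial

noncomputable section KerE7Aux

private def emb' : MvPolynomial (Fin 2) ℂ →ₐ[ℂ] MvPolynomial (Fin 4) ℂ := aeval ![X 2, X 3]

private def jmap' : MvPolynomial (Fin 2) ℂ →ₐ[ℂ] MvPolynomial (Fin 3) ℂ := aeval ![X 2 ^ 2, X 1]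

private def psi' : MvPolynomial (Fin 4) ℂ →ₐ[ℂ] MvPolynomial (Fin 3) ℂ :=
  aeval ![X 0 ^ 2, X 0 * X 2, X 2 ^ 2, X 1]

private lemma psi_emb (q : MvPolynomial (Fin 2) ℂ) : psi' (emb' q) = jmap' q := by
  have h : psi'.comp emb' = jmap' := by
    apply MvPolynomial.algHom_ext
    intro i
    fin_cases i <;> simp [psi', emb', jmap']
  exact DFunLike.congr_fun h q

private lemma eval_jmap (v : Fin 3 → ℂ) (q : MvPolynomial (Fin 2) ℂ) :
    eval v (jmap' q) = eval ![v 2 ^ 2, v 1] q := by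
  have h : (aeval v : MvPolynomial (Fin 3) ℂ →ₐ[ℂ] ℂ).comp jmap'
      = aeval ![v 2 ^ 2, v 1] := by
    apply MvPolynomial.algHom_ext
    intro i
    fin_cases i <;> simp [jmap']
  have h2 := DFunLike.congr_fun h q
  rw [AlgHom.comp_apply] at h2
  exact h2

lemma normal_form (p : MvPolynomial (Fin 4) ℂ) :
    ∃ q₀ q₁ : MvPolynomial (Fin 2) ℂ, ∃ u v : MvPolynomial (Fin 4) ℂ,
      p = emb' q₀ + X 1 * emb' q₁ + u * (X 0 * X 2 - X 1 ^ 2)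
        + v * (X 0 + X 3 ^ 3 + X 2 ^ 2) := by
  induction p using MvPolynomial.induction_on with
  | C a => exact ⟨C a, 0, 0, 0, by simp [emb']⟩
  | add p q hp hq =>
      obtain ⟨q₀, q₁, u, v, hp⟩ := hp
      obtain ⟨r₀, r₁, s, t, hq⟩ := hq
      exact ⟨q₀ + r₀, q₁ + r₁, u + s, v + t, by rw [hp, hq]; simp only [map_add]; ring⟩
  | mul_X p i hp =>
      obtain ⟨q₀, q₁, u, v, hp⟩ := hp
      fin_cases i
      · exact ⟨-(X 1 ^ 3 + X 0 ^ 2) * q₀, -(X 1 ^ 3 + X 0 ^ 2) * q₁, u * X 0,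
          v * X 0 + emb' q₀ + X 1 * emb' q₁, by
            show p * X 0 = _
            rw [hp]; simp only [map_mul, map_add, map_neg, map_pow, emb', aeval_X,
              Matrix.cons_val_zero, Matrix.cons_val_one, Matrix.head_cons]; ring⟩
      · exact ⟨-(X 0 * (X 1 ^ 3 + X 0 ^ 2)) * q₁, q₀, u * X 1 - emb' q₁,
          v * X 1 + X 2 * emb' q₁, by
            show p * X 1 = _
            rw [hp]; simp only [map_mul, map_add, map_neg, map_pow, emb', aeval_X,
              Matrix.cons_val_zero, Matrix.cons_val_one, Matrix.head_cons]; ring⟩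
      · exact ⟨X 0 * q₀, X 0 * q₁, u * X 2, v * X 2, by
            show p * X 2 = _
            rw [hp]; simp only [map_mul, map_add, map_neg, map_pow, emb', aeval_X,
              Matrix.cons_val_zero, Matrix.cons_val_one, Matrix.head_cons]; ring⟩
      · exact ⟨X 1 * q₀, X 1 * q₁, u * X 3, v * X 3, by
            show p * X 3 = _
            rw [hp]; simp only [map_mul, map_add, map_neg, map_pow, emb', aeval_X,
              Matrix.cons_val_zero, Matrix.cons_val_one, Matrix.head_cons]; ring⟩

end KerE7Aux

/-- Let `φ : ℂ[A,B,C,D] → ℂ[x,y,z]/(x² + y³ + z⁴)` send `A ↦ x̄²`, `B ↦ x̄z̄`,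
`C ↦ z̄²`, `D ↦ ȳ`.  Then `ker φ = (AC − B², A + D³ + C²)`. -/
theorem ker_E7_invariants_map
    (φ : MvPolynomial (Fin 4) ℂ →ₐ[ℂ]
      (MvPolynomial (Fin 3) ℂ ⧸
        Ideal.span ({X 0 ^ 2 + X 1 ^ 3 + X 2 ^ 4} : Set (MvPolynomial (Fin 3) ℂ))))
    (hφ : φ = aeval
      ![Ideal.Quotient.mk _ (X 0 ^ 2), Ideal.Quotient.mk _ (X 0 * X 2),
        Ideal.Quotient.mk _ (X 2 ^ 2), Ideal.Quotient.mk _ (X 1)]) :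
    RingHom.ker φ.toRingHom =
      Ideal.span ({X 0 * X 2 - X 1 ^ 2, X 0 + X 3 ^ 3 + X 2 ^ 2} :
        Set (MvPolynomial (Fin 4) ℂ)) := by
  subst hφ
  set f : MvPolynomial (Fin 3) ℂ := X 0 ^ 2 + X 1 ^ 3 + X 2 ^ 4 with hf
  set I : Ideal (MvPolynomial (Fin 3) ℂ) := Ideal.span {f} with hI
  -- the map factors through psi'
  have hcomp : (aeval
      ![Ideal.Quotient.mk I (X 0 ^ 2), Ideal.Quotient.mk I (X 0 * X 2),
        Ideal.Quotient.mk I (X 2 ^ 2), Ideal.Quotient.mk I (X 1)] :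
          MvPolynomial (Fin 4) ℂ →ₐ[ℂ] _)
      = (Ideal.Quotient.mkₐ ℂ I).comp psi' := by
    apply MvPolynomial.algHom_ext
    intro i
    fin_cases i <;> simp [psi']
  apply le_antisymm
  · intro p hp
    rw [RingHom.mem_ker] at hp
    obtain ⟨q₀, q₁, u, v, rfl⟩ := normal_form p
    have hp' : psi' (emb' q₀ + X 1 * emb' q₁) + psi' v * f ∈ I := by
      have hg1 : psi' ((X 0 : MvPolynomial (Fin 4) ℂ) * X 2 - X 1 ^ 2) = 0 := by
        simp [psi']
        ring
      have hg2 : psi' ((X 0 : MvPolynomial (Fin 4) ℂ) + X 3 ^ 3 + X 2 ^ 2) = f := by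
        simp [psi', hf]
        ring
      have hval : psi' (emb' q₀ + X 1 * emb' q₁ + u * (X 0 * X 2 - X 1 ^ 2)
          + v * (X 0 + X 3 ^ 3 + X 2 ^ 2))
          = psi' (emb' q₀ + X 1 * emb' q₁) + psi' v * f := by
        rw [map_add, map_add, map_mul, map_mul, hg1, hg2, mul_zero, add_zero]
      have h0 : (Ideal.Quotient.mk I) (psi' (emb' q₀ + X 1 * emb' q₁
          + u * (X 0 * X 2 - X 1 ^ 2) + v * (X 0 + X 3 ^ 3 + X 2 ^ 2))) = 0 := by
        have := hp
        rw [hcomp] at this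
        simpa using this
      rw [← Ideal.Quotient.eq_zero_iff_mem, ← hval]
      exact h0
    have hmem : psi' (emb' q₀ + X 1 * emb' q₁) ∈ I := by
      have : psi' v * f ∈ I := Ideal.mul_mem_left _ _ (Ideal.subset_span rfl)
      have := Ideal.sub_mem _ hp' this
      simpa using this
    obtain ⟨c, hc⟩ := Ideal.mem_span_singleton.mp (hI ▸ hmem)
    -- evaluation identity on the variety
    have key : ∀ x y z : ℂ, x ^ 2 + y ^ 3 + z ^ 4 = 0 →
        eval ![z ^ 2, y] q₀ + x * z * eval ![z ^ 2, y] q₁ = 0 := by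
      intro x y z h0
      have hpsiX1 : psi' (X 1 : MvPolynomial (Fin 4) ℂ) = X 0 * X 2 := by simp [psi']
      have he := congrArg (eval ![x, y, z]) hc
      rw [map_add, map_mul, psi_emb, psi_emb, hpsiX1] at he
      simp only [map_add, map_mul, map_pow, eval_X, eval_jmap, hf,
        Matrix.cons_val_zero, Matrix.cons_val_one, Matrix.head_cons,
        Matrix.cons_val_two, Matrix.tail_cons] at he
      rw [h0, zero_mul] at he
      simpa using he
    -- extract roots conveniently
    have sqrt : ∀ a : ℂ, ∃ z : ℂ, z ^ 2 = a := fun a =>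
      IsAlgClosed.exists_pow_nat_eq a (n := 2) (by norm_num)
    have hw : ∀ w : Fin 2 → ℂ, ![w 0, w 1] = w := by
      intro w; funext i; fin_cases i <;> simp
    have hq0 : q₀ = 0 := by
      apply MvPolynomial.funext
      intro w
      obtain ⟨z, hz⟩ := sqrt (w 0)
      obtain ⟨x, hx⟩ := sqrt (-(w 1 ^ 3 + z ^ 4))
      have h1 := key x (w 1) z (by rw [hx]; ring)
      have h2 := key (-x) (w 1) z (by rw [neg_pow, hx]; ring)
      have h3 : eval ![z ^ 2, w 1] q₀ = 0 := by linear_combination (h1 + h2) / 2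
      rw [hz, hw w] at h3
      simpa using h3
    have hq1 : q₁ = 0 := by
      have hzero : (X 0 * (X 1 ^ 3 + X 0 ^ 2) : MvPolynomial (Fin 2) ℂ) * q₁ = 0 := by
        apply MvPolynomial.funext
        intro w
        simp only [map_mul, map_add, map_pow, eval_X, map_zero]
        rcases eq_or_ne (w 0) 0 with h | h
        · rw [h]; ring
        rcases eq_or_ne (w 1 ^ 3 + w 0 ^ 2) 0 with h' | h'
        · rw [h']; ring
        obtain ⟨z, hz⟩ := sqrt (w 0)
        obtain ⟨x, hx⟩ := sqrt (-(w 1 ^ 3 + z ^ 4))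
        have h1 := key x (w 1) z (by rw [hx]; ring)
        rw [hq0, hz, hw w] at h1
        have hz4 : z ^ 4 = w 0 ^ 2 := by rw [← hz]; ring
        have hxne : x ≠ 0 := by
          intro h0
          rw [h0] at hx
          rw [hz4] at hx
          exact h' (by linear_combination hx)
        have hzne : z ≠ 0 := by
          intro h0; rw [h0] at hz; exact h (by rw [← hz]; ring)
        have : eval w q₁ = 0 := by
          have h1' : x * z * eval w q₁ = 0 := by simpa using h1
          rcases mul_eq_zero.mp h1' with h2 | h2
          · rcases mul_eq_zero.mp h2 with h3 | h3
            · exact absurd h3 hxne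
            · exact absurd h3 hzne
          · exact h2
        rw [this]; ring
      have hX0 : (X 0 : MvPolynomial (Fin 2) ℂ) ≠ 0 := MvPolynomial.X_ne_zero 0
      have hXs : (X 1 ^ 3 + X 0 ^ 2 : MvPolynomial (Fin 2) ℂ) ≠ 0 := by
        intro h
        have := congrArg (eval ![(1 : ℂ), 0]) h
        simp at this
      rcases mul_eq_zero.mp hzero with h | h
      · rcases mul_eq_zero.mp h with h' | h'
        · exact absurd h' hX0
        · exact absurd h' hXs
      · exact h
    rw [hq0, hq1]
    rw [Ideal.mem_span_pair]
    refine ⟨u, v, ?_⟩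
    simp only [map_zero, mul_zero, zero_add, add_zero]
  · rw [Ideal.span_le]
    rintro x hx
    simp only [Set.mem_insert_iff, Set.mem_singleton_iff] at hx
    have hker : ∀ g : MvPolynomial (Fin 4) ℂ, psi' g ∈ I →
        (aeval
      ![Ideal.Quotient.mk I (X 0 ^ 2), Ideal.Quotient.mk I (X 0 * X 2),
        Ideal.Quotient.mk I (X 2 ^ 2), Ideal.Quotient.mk I (X 1)] :
          MvPolynomial (Fin 4) ℂ →ₐ[ℂ] _) g = 0 := by
      intro g hg
      rw [hcomp, AlgHom.comp_apply, Ideal.Quotient.mkₐ_eq_mk,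
        Ideal.Quotient.eq_zero_iff_mem]
      exact hg
    rcases hx with rfl | rfl
    · refine RingHom.mem_ker.mpr (hker _ ?_)
      have : psi' ((X 0 : MvPolynomial (Fin 4) ℂ) * X 2 - X 1 ^ 2) = 0 := by
        simp [psi']; ring
      rw [this]; exact Ideal.zero_mem I
    · refine RingHom.mem_ker.mpr (hker _ ?_)
      have : psi' ((X 0 : MvPolynomial (Fin 4) ℂ) + X 3 ^ 3 + X 2 ^ 2) = f := by
        simp [psi', hf]; ring
      rw [this]; exact Ideal.mem_span_singleton_self f
end

section
/- Let σ be the ℂ-algebra involution of ℂ[x,y,z] with σ(x) = −x, σ(y) = y, σ(z) = −z. Since σ fixes x² + y³ + z⁴, it descends to an involution σ̄ of R = ℂ[x,y,z]/(x² + y³ + z⁴). Then the fixed subalgebra R^σ̄ is isomorphic as a ℂ-algebra to ℂ[B,C,D]/(B² + C³ + CD³), via B ↦ class of xz, C ↦ class of z², D ↦ class of y. -/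
open MvPolynomial
noncomputable section
abbrev P3 := MvPolynomial (Fin 3) ℂ
abbrev P2 := MvPolynomial (Fin 2) ℂ
def φ : P3 →ₐ[ℂ] P3 := aeval ![X 0 * X 2, X 2 ^ 2, X 1]
def ρ : P2 →ₐ[ℂ] P2 := aeval ![X 1 ^ 2, X 0]
def fE : P3 := X 0 ^ 2 + X 1 ^ 3 + X 2 ^ 4
def gE : P3 := X 0 ^ 2 + X 1 ^ 3 + X 1 * X 2 ^ 3
def E : P3 ≃ₐ[ℂ] Polynomial P2 := MvPolynomial.finSuccEquiv ℂ 2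
lemma one_eq : (1 : Fin 3) = Fin.succ 0 := rfl
lemma two_eq : (2 : Fin 3) = Fin.succ 1 := rfl

lemma E_X0 : E (X 0) = Polynomial.X := finSuccEquiv_X_zero
lemma E_X1 : E (X 1) = Polynomial.C (X 0) := by rw [one_eq]; exact finSuccEquiv_X_succ
lemma E_X2 : E (X 2) = Polynomial.C (X 1) := by rw [two_eq]; exact finSuccEquiv_X_succ

lemma E_rename (a : P2) : E (rename Fin.succ a) = Polynomial.C a := by
  induction a using MvPolynomial.induction_on with
  | C c =>
      rw [rename_C]
      have : (C c : P3) = algebraMap ℂ P3 c := rfl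
      rw [this, AlgEquiv.commutes]
      rfl
  | add p q hp hq => rw [map_add, map_add, hp, hq, map_add]
  | mul_X p i hp => rw [map_mul, rename_X, map_mul, hp, show E (X i.succ) = Polynomial.C (X i) from finSuccEquiv_X_succ, ← Polynomial.C_mul]

lemma E_gE : E gE = Polynomial.X ^ 2 + Polynomial.C (X 0 ^ 3 + X 0 * X 1 ^ 3) := by
  rw [gE, map_add, map_add, map_pow, map_pow, map_mul, map_pow, E_X0, E_X1, E_X2]
  simp only [Polynomial.C_add, Polynomial.C_pow, Polynomial.C_mul]
  ring

lemma E_fE : E fE = Polynomial.X ^ 2 + Polynomial.C (X 0 ^ 3 + X 1 ^ 4) := by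
  rw [fE, map_add, map_add, map_pow, map_pow, map_pow, E_X0, E_X1, E_X2]
  simp only [Polynomial.C_add, Polynomial.C_pow, Polynomial.C_mul]
  ring

lemma phi_rename (a : P2) : φ (rename Fin.succ a) = rename Fin.succ (ρ a) := by
  rw [φ, ρ, aeval_rename, ← AlgHom.comp_apply, comp_aeval]
  have hfn : (![(X 0 : P3) * X 2, X 2 ^ 2, X 1] ∘ Fin.succ)
      = fun i => rename Fin.succ (![(X 1 : P2) ^ 2, X 0] i) := by
    funext i
    fin_cases i <;> simp [one_eq, two_eq]
  rw [hfn]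

lemma phi_gE : φ gE = X 2 ^ 2 * fE := by
  rw [gE, fE]
  simp only [φ, map_add, map_mul, map_pow, aeval_X, Matrix.cons_val_zero,
    Matrix.cons_val_one, Matrix.head_cons, Matrix.cons_val_two, Matrix.tail_cons]
  ring

lemma ρ_inj : Function.Injective ρ := by
  rw [injective_iff_map_eq_zero]
  intro a ha
  apply MvPolynomial.funext (q := 0)
  intro w
  obtain ⟨v, hv⟩ := IsAlgClosed.exists_pow_nat_eq (w 0) (n := 2) zero_lt_two
  have h1 : aeval ![w 1, v] (ρ a) = 0 := by rw [ha]; simp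
  rw [ρ, ← AlgHom.comp_apply, comp_aeval] at h1
  have h2 : (fun i => aeval ![w 1, v] (![(X 1 : P2) ^ 2, X 0] i)) = w := by
    funext i
    fin_cases i <;> simp [hv]
  rw [h2] at h1
  simpa using h1

lemma E_gE_monic : (E gE).Monic := by
  rw [E_gE]; exact Polynomial.monic_X_pow_add_C _ two_ne_zero

lemma E_gE_degree : (E gE).degree = 2 := by
  rw [E_gE]; exact Polynomial.degree_X_pow_add_C (by norm_num) _

lemma key_dvd (q : P3) (h : fE ∣ φ q) : gE ∣ q := by
  set r := E q %ₘ E gE with hrdef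
  have hrd : r.degree ≤ 1 := by
    have h2 := Polynomial.degree_modByMonic_lt (E q) E_gE_monic
    rw [E_gE_degree] at h2
    exact Order.lt_succ_iff.mp h2
  have hq : q = gE * E.symm (E q /ₘ E gE) + E.symm r := by
    apply E.injective
    rw [map_add, map_mul, AlgEquiv.apply_symm_apply, AlgEquiv.apply_symm_apply, add_comm]
    exact (Polynomial.modByMonic_add_div (E q) (E gE)).symm
  have hfr : fE ∣ φ (E.symm r) := by
    have h3 : φ q = X 2 ^ 2 * fE * φ (E.symm (E q /ₘ E gE)) + φ (E.symm r) := by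
      conv_lhs => rw [hq]
      rw [map_add, map_mul, phi_gE]
    have hd1 : fE ∣ X 2 ^ 2 * fE * φ (E.symm (E q /ₘ E gE)) :=
      ⟨X 2 ^ 2 * φ (E.symm (E q /ₘ E gE)), by ring⟩
    exact (dvd_add_right hd1).mp (h3 ▸ h)
  -- express r
  have hrform := Polynomial.eq_X_add_C_of_degree_le_one hrd
  set r1 := r.coeff 1
  set r0 := r.coeff 0
  have hsymm : E.symm r = rename Fin.succ r1 * X 0 + rename Fin.succ r0 := by
    apply E.injective
    rw [AlgEquiv.apply_symm_apply, map_add, map_mul, E_rename, E_rename, E_X0]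
    exact hrform
  have hEφ : E (φ (E.symm r)) =
      Polynomial.C (X 1 * ρ r1) * Polynomial.X + Polynomial.C (ρ r0) := by
    rw [hsymm, map_add, map_mul, map_add, map_mul, phi_rename, phi_rename,
      E_rename, E_rename]
    have : φ (X 0 : P3) = X 0 * X 2 := by simp [φ]
    rw [this, map_mul, E_X0, E_X2, Polynomial.C_mul]
    ring
  have hEdvd : E fE ∣ E (φ (E.symm r)) := map_dvd E.toAlgHom hfr
  have hzero : E (φ (E.symm r)) = 0 := by
    apply Polynomial.eq_zero_of_dvd_of_degree_lt hEdvd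
    rw [hEφ, E_fE, Polynomial.degree_X_pow_add_C (by norm_num)]
    exact lt_of_le_of_lt Polynomial.degree_linear_le (by norm_num)
  rw [hEφ] at hzero
  have h0 : ρ r0 = 0 := by
    have := congrArg (fun p => Polynomial.coeff p 0) hzero
    simpa using this
  have h1 : X 1 * ρ r1 = 0 := by
    have := congrArg (fun p => Polynomial.coeff p 1) hzero
    simpa using this
  have h1' : ρ r1 = 0 := by
    rcases mul_eq_zero.mp h1 with h | h
    · exact absurd h (MvPolynomial.X_ne_zero 1)
    · exact h
  have hr0 : r0 = 0 := ρ_inj (by rw [h0, map_zero])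
  have hr1 : r1 = 0 := ρ_inj (by rw [h1', map_zero])
  have : r = 0 := by rw [hrform, hr0, hr1]; simp
  rw [hq, this, map_zero, add_zero]
  exact Dvd.intro _ rfl

def σp : P3 →ₐ[ℂ] P3 := aeval ![-X 0, X 1, -X 2]

def gens : Set P3 := {X 0 ^ 2, X 0 * X 2, X 2 ^ 2, X 1}

lemma σp_monomial (s : Fin 3 →₀ ℕ) (c : ℂ) :
    σp (monomial s c) = monomial s ((-1) ^ (s 0 + s 2) * c) := by
  rw [σp, aeval_monomial, monomial_eq, Finsupp.prod_fintype _ _ (fun i => pow_zero _),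
    Finsupp.prod_fintype _ _ (fun i => pow_zero _), Fin.prod_univ_three, Fin.prod_univ_three]
  simp only [Matrix.cons_val_zero, Matrix.cons_val_one, Matrix.head_cons,
    Matrix.cons_val_two, Matrix.tail_cons]
  rw [neg_pow (X 0 : P3), neg_pow (X 2 : P3)]
  have : (algebraMap ℂ P3) c = C c := rfl
  rw [this, C_mul, C_pow, C_neg, C_1]
  ring
lemma coeff_σp (p : P3) (t : Fin 3 →₀ ℕ) :
    coeff t (σp p) = (-1) ^ (t 0 + t 2) * coeff t p := by
  conv_lhs => rw [p.as_sum, map_sum]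
  simp only [σp_monomial]
  rw [MvPolynomial.coeff_sum]
  simp only [coeff_monomial]
  rw [Finset.sum_congr rfl (fun s _ => ?_), Finset.sum_ite_eq' p.support t
    (fun s => (-1 : ℂ) ^ (t 0 + t 2) * coeff t p)]
  · split_ifs with h
    · rfl
    · rw [notMem_support_iff.mp h, mul_zero]
  · split_ifs with h
    · subst h; rfl
    · rfl

lemma invariant_mem (p : P3) (hp : σp p = p) : p ∈ Algebra.adjoin ℂ gens := by
  rw [p.as_sum]
  apply Subalgebra.sum_mem
  intro s hs
  have hc : coeff s p ≠ 0 := mem_support_iff.mp hs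
  have heven : Even (s 0 + s 2) := by
    by_contra hodd
    have h1 : ((-1 : ℂ)) ^ (s 0 + s 2) = -1 := Odd.neg_one_pow (Nat.odd_iff.mpr
      (by rcases Nat.even_or_odd (s 0 + s 2) with h|h; exact absurd h hodd; exact Nat.odd_iff.mp h))
    have h2 := coeff_σp p s
    rw [hp, h1, neg_one_mul] at h2
    exact hc (by linear_combination h2 / 2)
  rw [monomial_eq, Finsupp.prod_fintype _ _ (fun i => pow_zero _), Fin.prod_univ_three]
  have hC : (C (coeff s p) : P3) ∈ Algebra.adjoin ℂ gens := by
    have h3 : (C (coeff s p) : P3) = algebraMap ℂ P3 (coeff s p) := rfl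
    rw [h3]; exact Subalgebra.algebraMap_mem _ _
  refine mul_mem hC ?_
  have h1 : (X 1 : P3) ^ s 1 ∈ Algebra.adjoin ℂ gens :=
    pow_mem (Algebra.subset_adjoin (by simp [gens])) _
  have hx2 : (X 0 : P3) ^ 2 ∈ Algebra.adjoin ℂ gens := Algebra.subset_adjoin (by simp [gens])
  have hz2 : (X 2 : P3) ^ 2 ∈ Algebra.adjoin ℂ gens := Algebra.subset_adjoin (by simp [gens])
  have hxz1 : (X 0 : P3) * X 2 ∈ Algebra.adjoin ℂ gens := Algebra.subset_adjoin (by simp [gens])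
  have hxz : (X 0 : P3) ^ s 0 * X 2 ^ s 2 ∈ Algebra.adjoin ℂ gens := by
    rcases Nat.even_or_odd (s 0) with he | ho
    · have he2 : Even (s 2) := (Nat.even_add.mp heven).mp he
      obtain ⟨m, hm⟩ := he
      obtain ⟨n, hn⟩ := he2
      have h4 : (X 0 : P3) ^ s 0 * X 2 ^ s 2 = (X 0 ^ 2) ^ m * (X 2 ^ 2) ^ n := by
        rw [hm, hn]; ring
      rw [h4]
      exact mul_mem (pow_mem hx2 m) (pow_mem hz2 n)
    · have ho2 : Odd (s 2) := by
        rw [← Nat.not_even_iff_odd]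
        intro he2
        exact (Nat.not_even_iff_odd.mpr ho) ((Nat.even_add.mp heven).mpr he2)
      obtain ⟨m, hm⟩ := ho
      obtain ⟨n, hn⟩ := ho2
      have h4 : (X 0 : P3) ^ s 0 * X 2 ^ s 2
          = (X 0 * X 2) * ((X 0 ^ 2) ^ m * (X 2 ^ 2) ^ n) := by
        rw [hm, hn]; ring
      rw [h4]
      exact mul_mem hxz1 (mul_mem (pow_mem hx2 m) (pow_mem hz2 n))
  have h5 : (X 0 : P3) ^ s 0 * X 1 ^ s 1 * X 2 ^ s 2
      = (X 0 ^ s 0 * X 2 ^ s 2) * X 1 ^ s 1 := by ring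
  rw [h5]
  exact mul_mem hxz h1

lemma σp_invol (p : P3) : σp (σp p) = p := by
  have h : σp.comp σp = AlgHom.id ℂ P3 := by
    apply MvPolynomial.algHom_ext
    intro i
    fin_cases i <;> simp [σp]
  calc σp (σp p) = (σp.comp σp) p := rfl
  _ = p := by rw [h]; rfl

end

set_option synthInstance.maxHeartbeats 100000
set_option maxHeartbeats 1000000 in
/-- Let `σ̄` be the involution of `R = ℂ[x,y,z]/(x² + y³ + z⁴)` induced by
`x ↦ -x`, `y ↦ y`, `z ↦ -z`.  Then the fixed subalgebra `R^σ̄` is isomorphic as a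
ℂ-algebra to `ℂ[B,C,D]/(B² + C³ + CD³)`, via `B ↦ x̄z̄`, `C ↦ z̄²`, `D ↦ ȳ`. -/
theorem E7_as_quotient_of_E6
    (I : Ideal (MvPolynomial (Fin 3) ℂ))
    (hI : I = Ideal.span ({X 0 ^ 2 + X 1 ^ 3 + X 2 ^ 4} : Set (MvPolynomial (Fin 3) ℂ)))
    (σb : (MvPolynomial (Fin 3) ℂ ⧸ I) →ₐ[ℂ] (MvPolynomial (Fin 3) ℂ ⧸ I))
    (hx : σb (Ideal.Quotient.mk I (X 0)) = - Ideal.Quotient.mk I (X 0))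
    (hy : σb (Ideal.Quotient.mk I (X 1)) = Ideal.Quotient.mk I (X 1))
    (hz : σb (Ideal.Quotient.mk I (X 2)) = - Ideal.Quotient.mk I (X 2))
    (J : Ideal (MvPolynomial (Fin 3) ℂ))
    (hJ : J = Ideal.span
      ({X 0 ^ 2 + X 1 ^ 3 + X 1 * X 2 ^ 3} : Set (MvPolynomial (Fin 3) ℂ))) :
    ∃ e : (MvPolynomial (Fin 3) ℂ ⧸ J) ≃ₐ[ℂ]
        (AlgHom.equalizer σb (AlgHom.id ℂ (MvPolynomial (Fin 3) ℂ ⧸ I))),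
      (e (Ideal.Quotient.mk J (X 0)) : MvPolynomial (Fin 3) ℂ ⧸ I) =
          Ideal.Quotient.mk I (X 0 * X 2) ∧
      (e (Ideal.Quotient.mk J (X 1)) : MvPolynomial (Fin 3) ℂ ⧸ I) =
          Ideal.Quotient.mk I (X 2 ^ 2) ∧
      (e (Ideal.Quotient.mk J (X 2)) : MvPolynomial (Fin 3) ℂ ⧸ I) =
          Ideal.Quotient.mk I (X 1) := by
  classical
  have hIf : I = Ideal.span ({fE} : Set P3) := hI
  have hJg : J = Ideal.span ({gE} : Set P3) := hJ
  have hfI : fE ∈ I := by rw [hIf]; exact Ideal.subset_span rfl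
  set mkI : P3 →ₐ[ℂ] (P3 ⧸ I) := Ideal.Quotient.mkₐ ℂ I with hmkI
  set χ : P3 →ₐ[ℂ] (P3 ⧸ I) := mkI.comp φ with hχ
  have hcomm : σb.comp mkI = mkI.comp σp := by
    apply MvPolynomial.algHom_ext
    intro i
    fin_cases i <;>
      simp [hmkI, σp, Ideal.Quotient.mkₐ_eq_mk, hx, hy, hz]
  have hσφ : σp.comp φ = φ := by
    apply MvPolynomial.algHom_ext
    intro i
    fin_cases i <;> simp [σp, φ]
  have hfix : ∀ p : P3, σb (χ p) = χ p := by
    intro p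
    calc σb (χ p) = (σb.comp mkI) (φ p) := rfl
    _ = mkI (σp (φ p)) := by rw [hcomm]; rfl
    _ = χ p := by rw [show σp (φ p) = φ p from by rw [← AlgHom.comp_apply, hσφ]]; rfl
  set Eqz := AlgHom.equalizer σb (AlgHom.id ℂ (P3 ⧸ I)) with hEqz
  set χ' : P3 →ₐ[ℂ] Eqz := χ.codRestrict Eqz (fun p => (AlgHom.mem_equalizer _ _ _).mpr (hfix p))
    with hχ'
  have hmkfE : mkI fE = 0 := by
    show Ideal.Quotient.mk I fE = 0
    exact Ideal.Quotient.eq_zero_iff_mem.mpr hfI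
  have hχg : χ gE = 0 := by
    show mkI (φ gE) = 0
    rw [phi_gE, map_mul, hmkfE, mul_zero]
  have hker : ∀ a ∈ J, χ' a = 0 := by
    intro a ha
    rw [hJg, Ideal.mem_span_singleton] at ha
    obtain ⟨t, rfl⟩ := ha
    exact Subtype.ext (by show χ (gE * t) = 0; rw [map_mul, hχg, zero_mul])
  set χbar : (P3 ⧸ J) →ₐ[ℂ] Eqz := Ideal.Quotient.liftₐ J χ' hker with hχbar
  have hbar_mk : ∀ a : P3, χbar (Ideal.Quotient.mk J a) = χ' a := by
    intro a
    simp [hχbar, Ideal.Quotient.liftₐ_apply, Ideal.Quotient.lift_mk]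
    rfl
  have hinj : Function.Injective χbar := by
    rw [injective_iff_map_eq_zero]
    intro u hu
    obtain ⟨a, rfl⟩ := Ideal.Quotient.mk_surjective u
    rw [hbar_mk] at hu
    have h0 : χ a = 0 := congrArg Subtype.val hu
    have h1 : φ a ∈ I := by
      rwa [hχ, AlgHom.comp_apply, hmkI, Ideal.Quotient.mkₐ_eq_mk,
        Ideal.Quotient.eq_zero_iff_mem] at h0
    rw [hIf, Ideal.mem_span_singleton] at h1
    have h2 : gE ∣ a := key_dvd a h1
    rw [Ideal.Quotient.eq_zero_iff_mem, hJg, Ideal.mem_span_singleton]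
    exact h2
  have hsurj : Function.Surjective χbar := by
    rintro ⟨r, hr⟩
    rw [AlgHom.mem_equalizer] at hr
    obtain ⟨Pp, rfl⟩ := Ideal.Quotient.mk_surjective r
    have hr' : σb (mkI Pp) = mkI Pp := hr
    set P' := (2⁻¹ : ℂ) • (Pp + σp Pp) with hP'
    have hmkσ : mkI (σp Pp) = mkI Pp := by
      have h3 : mkI (σp Pp) = σb (mkI Pp) := by rw [← AlgHom.comp_apply, ← hcomm]; rfl
      rw [h3, hr']
    have hmkP' : mkI P' = mkI Pp := by
      rw [hP', map_smul, map_add, hmkσ, ← two_smul ℂ (mkI Pp), smul_smul,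
        inv_mul_cancel₀ (two_ne_zero), one_smul]
    have hinv : σp P' = P' := by
      rw [hP', map_smul, map_add, σp_invol, add_comm]
    have hmem := invariant_mem P' hinv
    have hrange : mkI P' ∈ χ.range := by
      have hmap : mkI P' ∈ (Algebra.adjoin ℂ gens).map mkI := ⟨P', hmem, rfl⟩
      rw [AlgHom.map_adjoin] at hmap
      refine Algebra.adjoin_le ?_ hmap
      rintro _ ⟨w, hw, rfl⟩
      simp only [SetLike.mem_coe, AlgHom.mem_range]
      simp only [gens, Set.mem_insert_iff, Set.mem_singleton_iff] at hw
      rcases hw with h | h | h | h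
      · -- w = X 0 ^ 2
        subst h
        refine ⟨-(X 2 ^ 3) - X 1 ^ 2, ?_⟩
        show mkI (φ (-(X 2 ^ 3) - X 1 ^ 2)) = mkI (X 0 ^ 2)
        have h4 : φ (-(X 2 ^ 3) - X 1 ^ 2) = -(X 1 ^ 3) - X 2 ^ 4 := by
          simp [φ]; ring
        rw [h4, hmkI]
        simp only [Ideal.Quotient.mkₐ_eq_mk]
        rw [Ideal.Quotient.eq]
        rw [hIf, Ideal.mem_span_singleton]
        exact ⟨-1, by rw [fE]; ring⟩
      · subst h
        exact ⟨X 0, by show mkI (φ (X 0)) = _; simp [φ]⟩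
      · subst h
        exact ⟨X 1, by show mkI (φ (X 1)) = _; simp [φ]⟩
      · subst h
        exact ⟨X 2, by show mkI (φ (X 2)) = _; simp [φ]⟩
    obtain ⟨p, hp⟩ := hrange
    have hp' : χ p = mkI P' := hp
    refine ⟨Ideal.Quotient.mk J p, ?_⟩
    rw [hbar_mk]
    exact Subtype.ext (by show χ p = mkI Pp; rw [hp', hmkP'])
  refine ⟨AlgEquiv.ofBijective χbar ⟨hinj, hsurj⟩, ?_, ?_, ?_⟩ <;>
  · show (χbar (Ideal.Quotient.mk J _) : P3 ⧸ I) = _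
    rw [hbar_mk]
    show mkI (φ _) = _
    simp [φ, hmkI, Ideal.Quotient.mkₐ_eq_mk]
end

section
/- Let f₁ = z₁² + z₂³ + z₃z₄ and f₂ = z₃⁵ + z₄² + z₁z₂⁴ in ℂ[z₁,z₂,z₃,z₄]. Then for every nonzero point a ∈ ℂ⁴ with f₁(a) = f₂(a) = 0, the 2×4 Jacobian matrix ((∂f_i/∂z_j)(a)) has rank 2; that is, the surface {f₁ = f₂ = 0} ⊂ ℂ⁴ has an isolated singularity at the origin. -/
/-!
If the Jacobian had rank less than `2` at a common zero `a`, all its `2 × 2` minors would vanish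
there. But `f₁`, `f₂` and four of these minors have the origin as their only common zero: each
coordinate `aᵢ` has a power lying in the ideal they generate, by explicit certificates.
-/

open MvPolynomial

theorem Matrix.rank_eq_card_height_of_det_submatrix_ne_zero {R m n : Type*} [CommRing R]
    [IsDomain R] [Fintype m] [DecidableEq m] [Fintype n] (M : Matrix m n R) (c : m → n)
    (h : (M.submatrix id c).det ≠ 0) : M.rank = Fintype.card m :=
  le_antisymm M.rank_le_card_height <|
    (rank_of_det_mem_nonZeroDivisors (mem_nonZeroDivisors_of_ne_zero h)).symm.trans_le
      (M.rank_submatrix_le id c)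

def spliceJacobian {R : Type*} [CommRing R] (a : Fin 4 → R) : Matrix (Fin 2) (Fin 4) R :=
  !![2 * a 0, 3 * a 1 ^ 2, a 3, a 2;
     a 1 ^ 4, 4 * a 0 * a 1 ^ 3, 5 * a 2 ^ 4, 2 * a 3]

theorem eq_zero_of_spliceJacobian_minors_eq_zero {K : Type*} [Field K] [CharZero K]
    {a : Fin 4 → K} (h₁ : a 0 ^ 2 + a 1 ^ 3 + a 2 * a 3 = 0)
    (h₂ : a 2 ^ 5 + a 3 ^ 2 + a 0 * a 1 ^ 4 = 0)
    (hminor : ∀ j k, ((spliceJacobian a).submatrix id ![j, k]).det = 0) : a = 0 := by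
  have m01 := hminor 0 1
  have m03 := hminor 0 3
  have m13 := hminor 1 3
  have m23 := hminor 2 3
  simp only [spliceJacobian, Matrix.det_fin_two, Matrix.submatrix_apply, id_eq, Matrix.of_apply,
    Matrix.cons_val', Matrix.cons_val_fin_one, Matrix.cons_val_zero, Matrix.cons_val_one,
    Matrix.cons_val] at m01 m03 m13 m23
  have h0 : a 0 ^ 4 = 0 := by
    linear_combination (-63 / 187 * a 2 * a 3 - 3 / 11 * a 1 ^ 3 + a 0 ^ 2) * h₁ +
      45 / 187 * a 2 ^ 2 * h₂ - 1 / 11 * m01 - 31 / 187 * a 0 * a 2 * m03 +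
      19 / 187 * a 1 * a 2 * m13 + 9 / 187 * a 2 ^ 2 * m23
  have h1 : a 1 ^ 6 = 0 := by
    linear_combination (-448 / 187 * a 2 * a 3 + 8 / 11 * a 1 ^ 3) * h₁ +
      320 / 187 * a 2 ^ 2 * h₂ - 1 / 11 * m01 + 112 / 187 * a 0 * a 2 * m03 +
      52 / 187 * a 1 * a 2 * m13 + 64 / 187 * a 2 ^ 2 * m23
  have h2 : a 2 ^ 6 = 0 := by
    linear_combination -24 / 17 * a 3 * h₁ + 22 / 17 * a 2 * h₂ + 6 / 17 * a 0 * m03 +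
      4 / 17 * a 1 * m13 + 1 / 17 * a 2 * m23
  have h3 : a 3 ^ 3 = 0 := by
    linear_combination -40 / 17 * a 0 * a 1 * a 3 * h₁ +
      (5 / 7 * a 3 + 200 / 119 * a 0 * a 1 * a 2) * h₂ + 10 / 17 * a 0 ^ 2 * a 1 * m03 +
      65 / 238 * a 0 * a 1 ^ 2 * m13 + (1 / 7 * a 3 + 40 / 119 * a 0 * a 1 * a 2) * m23
  funext i
  fin_cases i
  exacts [eq_zero_of_pow_eq_zero h0, eq_zero_of_pow_eq_zero h1, eq_zero_of_pow_eq_zero h2,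
    eq_zero_of_pow_eq_zero h3]

theorem eval_pderiv_eq_spliceJacobian {R : Type*} [CommRing R]
    {f : Fin 2 → MvPolynomial (Fin 4) R}
    (hf1 : f 0 = X 0 ^ 2 + X 1 ^ 3 + X 2 * X 3)
    (hf2 : f 1 = X 2 ^ 5 + X 3 ^ 2 + X 0 * X 1 ^ 4) (a : Fin 4 → R) :
    Matrix.of (fun i j => eval a (pderiv j (f i))) = spliceJacobian a := by
  ext i j
  fin_cases i <;> fin_cases j <;> simp [hf1, hf2, spliceJacobian, mul_assoc, mul_left_comm]

/-- For `f₁ = z₁² + z₂³ + z₃z₄` and `f₂ = z₃⁵ + z₄² + z₁z₂⁴` in `ℂ[z₁,z₂,z₃,z₄]`,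
at every nonzero common zero `a` the `2 × 4` Jacobian matrix `((∂fᵢ/∂zⱼ)(a))`
has rank `2`: the splice-type surface `{f₁ = f₂ = 0} ⊂ ℂ⁴` has an isolated
singularity at the origin. -/
theorem splice_surface_isolated_singularity
    (f : Fin 2 → MvPolynomial (Fin 4) ℂ)
    (hf1 : f 0 = X 0 ^ 2 + X 1 ^ 3 + X 2 * X 3)
    (hf2 : f 1 = X 2 ^ 5 + X 3 ^ 2 + X 0 * X 1 ^ 4)
    (a : Fin 4 → ℂ) (ha : a ≠ 0)
    (hzero : ∀ i : Fin 2, eval a (f i) = 0) :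
    Matrix.rank (Matrix.of fun (i : Fin 2) (j : Fin 4) =>
      eval a (pderiv j (f i))) = 2 := by
  have h₁ : a 0 ^ 2 + a 1 ^ 3 + a 2 * a 3 = 0 := by simpa [hf1] using hzero 0
  have h₂ : a 2 ^ 5 + a 3 ^ 2 + a 0 * a 1 ^ 4 = 0 := by simpa [hf2] using hzero 1
  rw [eval_pderiv_eq_spliceJacobian hf1 hf2]
  by_contra hrank
  refine ha (eq_zero_of_spliceJacobian_minors_eq_zero h₁ h₂ fun j k => ?_)
  by_contra hminor
  exact hrank ((spliceJacobian a).rank_eq_card_height_of_det_submatrix_ne_zero _ hminor)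
end
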